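/- arXiv:1805.00345 — 7 statements merged into one kernel-verified Lean document; each statement's English description precedes it below -/
import Mathlib

section
/- Let N ≥ 1. Let A be an (N+1)×(N+1) real matrix whose last row vanishes (A N j = 0 for all j, where N is the last index of Fin (N+1)), and set H = Aᵀ * A. Let φ : Fin (N+1) → ℝ and μ ∈ ℝ with H.mulVec φ = μ • φ. Let A' be an N×N real matrix, κ ∈ ℝ with κ ≠ 0, and ε ∈ ℝ, and suppose the shape invariance condition holds: for all i, j ∈ Fin N, (A * Aᵀ) (i.castSucc) (j.castSucc) = κ · (A'ᵀ * A') i j + (if i = j then ε else 0). Define ψ : Fin N → ℝ by ψ i = (A.mulVec φ) (i.castSucc). Then (A'ᵀ * A').mulVec ψ = (κ⁻¹ · (μ - ε)) • ψ. -/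
open Matrix

theorem darboux_partner_eigenvector (N : ℕ) (hN : 1 ≤ N)
    (A : Matrix (Fin (N + 1)) (Fin (N + 1)) ℝ)
    (hlast : ∀ j, A (Fin.last N) j = 0)
    (φ : Fin (N + 1) → ℝ) (μ : ℝ)
    (hφ : (Aᵀ * A).mulVec φ = μ • φ)
    (A' : Matrix (Fin N) (Fin N) ℝ) (κ ε : ℝ) (hκ : κ ≠ 0)
    (hsi : ∀ i j : Fin N,
      (A * Aᵀ) i.castSucc j.castSucc = κ * (A'ᵀ * A') i j + (if i = j then ε else 0))
    (ψ : Fin N → ℝ) (hψ : ∀ i, ψ i = (A.mulVec φ) i.castSucc) :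
    (A'ᵀ * A').mulVec ψ = (κ⁻¹ * (μ - ε)) • ψ := by
  have hlastv : (A.mulVec φ) (Fin.last N) = 0 := by
    simp [mulVec, dotProduct, hlast]
  have h1 : (A * Aᵀ).mulVec (A.mulVec φ) = μ • A.mulVec φ := by
    rw [mulVec_mulVec, mul_assoc, ← mulVec_mulVec, hφ, mulVec_smul]
  funext i
  have h2 := congrFun h1 i.castSucc
  rw [mulVec, dotProduct, Fin.sum_univ_castSucc] at h2
  simp only [hlastv, mul_zero, add_zero] at h2
  have h3 : ∀ j : Fin N, (A * Aᵀ) i.castSucc j.castSucc * (A.mulVec φ) j.castSucc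
      = (κ * (A'ᵀ * A') i j + (if i = j then ε else 0)) * ψ j := by
    intro j; rw [hsi, hψ]
  rw [Finset.sum_congr rfl (fun j _ => h3 j)] at h2
  have h4 : ∑ j : Fin N, (κ * (A'ᵀ * A') i j + (if i = j then ε else 0)) * ψ j
      = κ * ((A'ᵀ * A').mulVec ψ) i + ε * ψ i := by
    simp only [add_mul, Finset.sum_add_distrib, mulVec, dotProduct, Finset.mul_sum]
    congr 1
    · exact Finset.sum_congr rfl (fun j _ => by ring)
    · simp [Finset.sum_ite_eq, ite_mul]
  rw [h4] at h2
  have h5 : κ * ((A'ᵀ * A') *ᵥ ψ) i + ε * ψ i = μ * ψ i := by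
    simp only [Pi.smul_apply, smul_eq_mul] at h2; rw [← hψ i] at h2; exact h2
  rw [Pi.smul_apply, smul_eq_mul]
  field_simp
  linarith [h5]
end

section
/- Let N ≥ 1. Let A be an (N+1)×(N+1) real matrix whose last row vanishes, set H = Aᵀ * A, and suppose φ : Fin (N+1) → (Fin (N+1) → ℝ) is a basis of ℝ^(N+1) with H.mulVec (φ n) = (E n) • φ n, where E : Fin (N+1) → ℝ is strictly increasing (E 0 < E 1 < ⋯ < E N). Let A' be an N×N real matrix and κ > 0, and suppose for all i, j ∈ Fin N, (A * Aᵀ) (i.castSucc) (j.castSucc) = κ · (A'ᵀ * A') i j + (if i = j then E 1 else 0). Assume that for every n ∈ Fin N the vector ψ n : Fin N → ℝ defined by (ψ n) i = (A.mulVec (φ (n.succ))) (i.castSucc) is nonzero. Then a real number μ is an eigenvalue of A'ᵀ * A' (i.e., there exists v ≠ 0 with (A'ᵀ * A').mulVec v = μ • v) if and only if μ = κ⁻¹ · (E (n.succ) - E 1) for some n ∈ Fin N. -/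
open Matrix

/-!
Since `A (AᵀA) = (AAᵀ) A`, each `A φₙ` is an eigenvector of `AAᵀ` with eigenvalue `Eₙ`. Its last
coordinate vanishes, so its first `N` coordinates `ψₙ` form an eigenvector of the upper-left block
of `AAᵀ`, which by shape invariance is `κ A'ᵀA' + E₁`. For `n ≥ 1` this gives `N` eigenvectors of
`A'ᵀA'` with pairwise distinct eigenvalues `κ⁻¹ (Eₙ - E₁)` in an `N`-dimensional space, and these
exhaust its spectrum: an eigenvector for any other eigenvalue would make `N + 1` independent vectors.
-/

theorem Module.End.hasEigenvalue_iff_mem_range_of_hasEigenvector {K V ι : Type*} [Field K]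
    [AddCommGroup V] [Module K V] [FiniteDimensional K V] [Fintype ι] {f : Module.End K V}
    {μs : ι → K} (hμs : Function.Injective μs) {ψ : ι → V}
    (hψ : ∀ i, f.HasEigenvector (μs i) (ψ i)) (hdim : Module.finrank K V ≤ Fintype.card ι)
    {μ : K} : f.HasEigenvalue μ ↔ μ ∈ Set.range μs := by
  refine ⟨fun hμ => ?_, fun ⟨i, hi⟩ => hi ▸ hasEigenvalue_of_hasEigenvector (hψ i)⟩
  by_contra hμs_ne
  obtain ⟨v, hv⟩ := hμ.exists_hasEigenvector
  have hinj : Function.Injective fun o : Option ι => o.elim μ μs := by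
    rintro (_ | i) (_ | j) h
    · rfl
    · exact absurd ⟨j, h.symm⟩ hμs_ne
    · exact absurd ⟨i, h⟩ hμs_ne
    · exact congrArg some (hμs h)
  have hli := f.eigenvectors_linearIndependent' _ hinj (fun o => o.elim v ψ)
    (by rintro (_ | i) <;> simp [hv, hψ])
  have := hli.fintype_card_le_finrank
  rw [Fintype.card_option] at this
  omega

theorem Matrix.hasEigenvalue_toLin'_iff {K n : Type*} [Field K] [Fintype n] [DecidableEq n]
    (M : Matrix n n K) (μ : K) :
    Module.End.HasEigenvalue (toLin' M) μ ↔ ∃ v, v ≠ 0 ∧ M *ᵥ v = μ • v := by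
  simp only [Module.End.hasEigenvalue_iff, Submodule.ne_bot_iff, Module.End.mem_eigenspace_iff,
    toLin'_apply]
  exact exists_congr fun v => and_comm

theorem Matrix.mul_transpose_mulVec_mulVec_eq_smul {R m n : Type*} [CommSemiring R] [Fintype m]
    [Fintype n] {A : Matrix m n R} {x : n → R} {e : R} (hx : (Aᵀ * A) *ᵥ x = e • x) :
    (A * Aᵀ) *ᵥ (A *ᵥ x) = e • (A *ᵥ x) := by
  rw [mulVec_mulVec, Matrix.mul_assoc, ← mulVec_mulVec, hx, mulVec_smul]

theorem Matrix.submatrix_castSucc_mulVec {R : Type*} [NonUnitalNonAssocSemiring R] {N : ℕ}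
    (B : Matrix (Fin (N + 1)) (Fin (N + 1)) R) {w : Fin (N + 1) → R} (hw : w (Fin.last N) = 0) :
    B.submatrix Fin.castSucc Fin.castSucc *ᵥ (w ∘ Fin.castSucc) = (B *ᵥ w) ∘ Fin.castSucc := by
  ext i
  simp [mulVec, dotProduct, Fin.sum_univ_castSucc (n := N), hw]

theorem Matrix.mulVec_eq_smul_of_smul_add_smul_one_mulVec {K n : Type*} [Field K] [Fintype n]
    [DecidableEq n] {M : Matrix n n K} {v : n → K} {c d e : K} (hc : c ≠ 0)
    (hv : (c • M + d • 1) *ᵥ v = e • v) : M *ᵥ v = (c⁻¹ * (e - d)) • v := by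
  rw [add_mulVec, smul_mulVec, smul_mulVec, one_mulVec] at hv
  rw [mul_smul, sub_smul, ← hv, add_sub_cancel_right, inv_smul_smul₀ hc]

theorem Matrix.mulVec_last_eq_zero {R : Type*} [NonUnitalNonAssocSemiring R] {N : ℕ}
    {A : Matrix (Fin (N + 1)) (Fin (N + 1)) R} (hlast : ∀ j, A (Fin.last N) j = 0)
    (x : Fin (N + 1) → R) : (A *ᵥ x) (Fin.last N) = 0 := by
  simp [mulVec, dotProduct, hlast]

theorem partner_spectrum_general (N : ℕ)
    (A : Matrix (Fin (N + 1)) (Fin (N + 1)) ℝ)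
    (hlast : ∀ j, A (Fin.last N) j = 0)
    (φ : Fin (N + 1) → (Fin (N + 1) → ℝ))
    (E : Fin (N + 1) → ℝ) (hE : StrictMono E)
    (heig : ∀ n, (Aᵀ * A).mulVec (φ n) = E n • φ n)
    (A' : Matrix (Fin N) (Fin N) ℝ) (κ : ℝ) (hκ : 0 < κ)
    (hsi : ∀ i j : Fin N,
      (A * Aᵀ) i.castSucc j.castSucc = κ * (A'ᵀ * A') i j + (if i = j then E 1 else 0))
    (hψ : ∀ n : Fin N, (fun i : Fin N => (A.mulVec (φ n.succ)) i.castSucc) ≠ 0) :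
    ∀ μ : ℝ,
      (∃ v : Fin N → ℝ, v ≠ 0 ∧ (A'ᵀ * A').mulVec v = μ • v) ↔
        ∃ n : Fin N, μ = κ⁻¹ * (E n.succ - E 1) := by
  intro μ
  have hblock : (A * Aᵀ).submatrix Fin.castSucc Fin.castSucc = κ • (A'ᵀ * A') + E 1 • 1 := by
    ext i j
    simp [hsi, one_apply]
  have hψeig (n : Fin N) : Module.End.HasEigenvector (toLin' (A'ᵀ * A'))
      (κ⁻¹ * (E n.succ - E 1)) ((A *ᵥ φ n.succ) ∘ Fin.castSucc) := by
    refine ⟨Module.End.mem_eigenspace_iff.2 ?_, hψ n⟩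
    refine mulVec_eq_smul_of_smul_add_smul_one_mulVec hκ.ne' ?_
    rw [← hblock, submatrix_castSucc_mulVec _ (mulVec_last_eq_zero hlast _),
      mul_transpose_mulVec_mulVec_eq_smul (heig _)]
    rfl
  have hinj : Function.Injective fun n : Fin N => κ⁻¹ * (E n.succ - E 1) := fun a b hab =>
    Fin.succ_injective _ <| hE.injective <| by
      simpa using (mul_right_injective₀ (inv_ne_zero hκ.ne') hab)
  rw [← hasEigenvalue_toLin'_iff, Module.End.hasEigenvalue_iff_mem_range_of_hasEigenvector hinj
    hψeig (by simp)]
  exact exists_congr fun n => eq_comm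

theorem partner_spectrum (N : ℕ) (hN : 1 ≤ N)
    (A : Matrix (Fin (N + 1)) (Fin (N + 1)) ℝ)
    (hlast : ∀ j, A (Fin.last N) j = 0)
    (φ : Fin (N + 1) → (Fin (N + 1) → ℝ))
    (hindep : LinearIndependent ℝ φ)
    (hspan : Submodule.span ℝ (Set.range φ) = ⊤)
    (E : Fin (N + 1) → ℝ) (hE : StrictMono E)
    (heig : ∀ n, (Aᵀ * A).mulVec (φ n) = E n • φ n)
    (A' : Matrix (Fin N) (Fin N) ℝ) (κ : ℝ) (hκ : 0 < κ)
    (hsi : ∀ i j : Fin N,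
      (A * Aᵀ) i.castSucc j.castSucc = κ * (A'ᵀ * A') i j + (if i = j then E 1 else 0))
    (hψ : ∀ n : Fin N, (fun i : Fin N => (A.mulVec (φ n.succ)) i.castSucc) ≠ 0) :
    ∀ μ : ℝ,
      (∃ v : Fin N → ℝ, v ≠ 0 ∧ (A'ᵀ * A').mulVec v = μ • v) ↔
        ∃ n : Fin N, μ = κ⁻¹ * (E n.succ - E 1) :=
  partner_spectrum_general N A hlast φ E hE heig A' κ hκ hsi hψ
end

section
/- Let n ∈ ℕ and let H, E, P, M, S be n×n complex matrices such that H commutes with each of P, M, S; P commutes with M; P - M is invertible; P * M is invertible; and the closure relation holds: H*(H*E - E*H) - (H*E - E*H)*H = -E*(P*M) + (H*E - E*H)*(P + M) + S. Define a⁺ = ((H*E - E*H) - (E - S*(P*M)⁻¹)*M) * (P - M)⁻¹ and a⁻ = -((H*E - E*H) - (E - S*(P*M)⁻¹)*P) * (P - M)⁻¹. Then for every t ∈ ℝ: Matrix.exp(t • (Complex.I • H)) * E * Matrix.exp(-(t • (Complex.I • H))) = a⁺ * Matrix.exp(t • (Complex.I • P)) + a⁻ * Matrix.exp(t • (Complex.I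 • M)) + S * (P*M)⁻¹. -/
/-!
With `A = [H, E]` and `C = S (PM)⁻¹`, the closure relation reads
`[H, A] = -(E - C) P M + A (P + M)`, so `A - (E - C) M` and `A - (E - C) P` are ladder
operators for `H`: `H a = a (H + P)`, resp. `H a = a (H + M)`. Right multiplication by
`(P - M)⁻¹`, which commutes with `H`, `P`, `M`, preserves this and turns them into `a⁺`, `a⁻`
with `a⁺ + a⁻ + C = E`. For a ladder operator, `e^{xH} a e^{-xH} = a e^{x(H + P)} e^{-xH} = a e^{xP}`,
while `C` commutes with `H`.
-/

open Matrix

open NormedSpace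

theorem semiconjBy_of_closure {R : Type*} [Ring R] {H E P M S C : R}
    (hHM : Commute H M) (hPM : Commute P M) (hHC : Commute H C) (hC : C * (P * M) = S)
    (hcr : H * (H * E - E * H) - (H * E - E * H) * H
      = -(E * (P * M)) + (H * E - E * H) * (P + M) + S) :
    SemiconjBy (H * E - E * H - (E - C) * M) (H + P) H := by
  have hHA : H * (H * E - E * H)
      = (H * E - E * H) * H + (-(E * (P * M)) + (H * E - E * H) * (P + M) + S) := by
    rw [← hcr]; abel
  have hHX : H * (E - C) = (H * E - E * H) + (E - C) * H := by
    rw [mul_sub, hHC.eq]; noncomm_ring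
  have hXMP : (E - C) * M * P = E * (P * M) - S := by
    rw [← hC, mul_assoc, ← hPM.eq]; noncomm_ring
  calc (H * E - E * H - (E - C) * M) * (H + P)
      = (H * E - E * H) * H + (H * E - E * H) * P - (E - C) * (H * M) - (E - C) * M * P := by
        rw [hHM.eq]; noncomm_ring
    _ = H * (H * E - E * H) - H * (E - C) * M := by
        rw [hHA, hHX, hXMP]; noncomm_ring
    _ = H * (H * E - E * H - (E - C) * M) := by noncomm_ring

theorem Matrix.commute_nonsing_inv_right {m α : Type*} [Fintype m] [DecidableEq m] [CommRing α]
    {A B : Matrix m m α} (h : Commute A B) : Commute A B⁻¹ := by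
  by_cases hB : IsUnit B.det
  · simpa using h.units_inv_right (u := (B.isUnit_iff_isUnit_det.mpr hB).unit)
  · rw [nonsing_inv_apply_not_isUnit B hB]
    exact Commute.zero_right A

theorem exp_mul_mul_exp_neg_of_semiconjBy {𝔸 : Type*} [NormedRing 𝔸] [NormedAlgebra ℚ 𝔸]
    [CompleteSpace 𝔸] {a x d : 𝔸} (hd : Commute x d) (ha : SemiconjBy a (x + d) x) :
    exp x * a * exp (-x) = a * exp d := by
  rw [← ha.exp_right.eq, mul_assoc,
    ← exp_add_of_commute ((Commute.refl x).add_left hd.symm).neg_right, add_neg_cancel_comm]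

theorem Matrix.exp_smul_mul_mul_exp_neg_smul_of_semiconjBy {m 𝔸 𝕜 : Type*} [Fintype m]
    [DecidableEq m] [NormedRing 𝔸] [NormedAlgebra ℚ 𝔸] [CompleteSpace 𝔸] [CommSemiring 𝕜]
    [Algebra 𝕜 𝔸] {a x d : Matrix m m 𝔸} (c : 𝕜) (hd : Commute x d)
    (ha : SemiconjBy a (x + d) x) :
    exp (c • x) * a * exp (-(c • x)) = a * exp (c • d) := by
  -- Completeness is an instance for the entrywise uniformity, which agrees with the operator
  -- norm's only after unfolding, so instance search does not find it there.
  have hcomplete : CompleteSpace (Matrix m m 𝔸) := inferInstance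
  open scoped Matrix.Norms.Operator in
  exact @exp_mul_mul_exp_neg_of_semiconjBy _ _ _ hcomplete _ _ _
    ((hd.smul_left c).smul_right c) (by simpa only [smul_add] using ha.smul_right c)

theorem heisenberg_solution_from_closure (n : ℕ)
    (H E P M S : Matrix (Fin n) (Fin n) ℂ)
    (hHP : H * P = P * H) (hHM : H * M = M * H) (hHS : H * S = S * H)
    (hPM : P * M = M * P)
    (hPMsub : IsUnit (P - M)) (hPMmul : IsUnit (P * M))
    (hcr : H * (H * E - E * H) - (H * E - E * H) * H
      = -(E * (P * M)) + (H * E - E * H) * (P + M) + S) :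
    ∀ t : ℝ,
      NormedSpace.exp (t • (Complex.I • H)) * E *
          NormedSpace.exp (-(t • (Complex.I • H)))
        = (((H * E - E * H) - (E - S * (P * M)⁻¹) * M) * (P - M)⁻¹) *
              NormedSpace.exp (t • (Complex.I • P))
          + (-((H * E - E * H) - (E - S * (P * M)⁻¹) * P) * (P - M)⁻¹) *
              NormedSpace.exp (t • (Complex.I • M))
          + S * (P * M)⁻¹ := by
  intro t
  replace hHP : Commute H P := hHP
  replace hHM : Commute H M := hHM
  replace hHS : Commute H S := hHS
  replace hPM : Commute P M := hPM
  simp only [← smul_assoc]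
  set c : ℂ := t • Complex.I
  set C := S * (P * M)⁻¹
  set aPlus := (H * E - E * H - (E - C) * M) * (P - M)⁻¹
  set aMinus := -(H * E - E * H - (E - C) * P) * (P - M)⁻¹
  have hC : C * (P * M) = S := by
    rw [mul_assoc, nonsing_inv_mul _ ((isUnit_iff_isUnit_det _).mp hPMmul), mul_one]
  have hHC : Commute H C := hHS.mul_right (commute_nonsing_inv_right (hHP.mul_right hHM))
  have hsplit : E = aPlus + aMinus + C := by
    have : aPlus + aMinus = (E - C) * ((P - M) * (P - M)⁻¹) := by
      simp only [aPlus, aMinus]; noncomm_ring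
    rw [this, mul_nonsing_inv _ ((isUnit_iff_isUnit_det _).mp hPMsub), mul_one, sub_add_cancel]
  have hHPM : Commute H (P - M) := hHP.sub_right hHM
  have haPlus : SemiconjBy aPlus (H + P) H :=
    (semiconjBy_of_closure hHM hPM hHC hC hcr).mul_left
      (commute_nonsing_inv_right (hHPM.add_left ((Commute.refl P).sub_right hPM))).symm
  have haMinus : SemiconjBy aMinus (H + M) H :=
    (semiconjBy_of_closure (S := S) hHP hPM.symm hHC (by rwa [← hPM.eq])
      (by rwa [← hPM.eq, add_comm M P])).neg_left.mul_left
      (commute_nonsing_inv_right (hHPM.add_left (hPM.symm.sub_right (Commute.refl M)))).symm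
  have hCzero : SemiconjBy C (H + 0) H := by rw [add_zero]; exact hHC.symm
  rw [hsplit]
  simp only [mul_add, add_mul]
  rw [exp_smul_mul_mul_exp_neg_smul_of_semiconjBy c hHP haPlus,
    exp_smul_mul_mul_exp_neg_smul_of_semiconjBy c hHM haMinus,
    exp_smul_mul_mul_exp_neg_smul_of_semiconjBy c (Commute.zero_right H) hCzero, smul_zero,
    exp_zero, mul_one]
end

section
/- Let n ∈ ℕ and let H, E, P, M, S be n×n complex matrices such that H commutes with each of P, M, S; P commutes with M; P - M is invertible; P * M is invertible; and the closure relation holds: H*(H*E - E*H) - (H*E - E*H)*H = -E*(P*M) + (H*E - E*H)*(P + M) + S. Define a⁺ = ((H*E - E*H) - (E - S*(P*M)⁻¹)*M) * (P - M)⁻¹ and a⁻ = -((H*E - E*H) - (E - S*(P*M)⁻¹)*P) * (P - M)⁻¹. Then: (i) a⁺ + a⁻ = E - S*(P*M)⁻¹; (ii) H*a⁺ - a⁺*H = a⁺*P; and (iii) H*a⁻ - a⁻*H = a⁻*M. -/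
open Matrix

private lemma comm_inv {n : ℕ} {A X : Matrix (Fin n) (Fin n) ℂ}
    (hA : IsUnit A) (h : X * A = A * X) : X * A⁻¹ = A⁻¹ * X := by
  have hd := (Matrix.isUnit_iff_isUnit_det A).mp hA
  have h1 : A⁻¹ * (X * A) * A⁻¹ = A⁻¹ * (A * X) * A⁻¹ := by rw [h]
  calc X * A⁻¹ = (A⁻¹ * A) * X * A⁻¹ := by
        rw [Matrix.nonsing_inv_mul _ hd, one_mul]
    _ = A⁻¹ * (A * X) * A⁻¹ := by noncomm_ring
    _ = A⁻¹ * (X * A) * A⁻¹ := h1.symm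
    _ = A⁻¹ * X * (A * A⁻¹) := by noncomm_ring
    _ = A⁻¹ * X := by rw [Matrix.mul_nonsing_inv _ hd, mul_one]

theorem creation_annihilation_exchange_relations (n : ℕ)
    (H E P M S : Matrix (Fin n) (Fin n) ℂ)
    (hHP : H * P = P * H) (hHM : H * M = M * H) (hHS : H * S = S * H)
    (hPM : P * M = M * P)
    (hPMsub : IsUnit (P - M)) (hPMmul : IsUnit (P * M))
    (hcr : H * (H * E - E * H) - (H * E - E * H) * H
      = -(E * (P * M)) + (H * E - E * H) * (P + M) + S)
    (aplus aminus : Matrix (Fin n) (Fin n) ℂ)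
    (haplus : aplus = ((H * E - E * H) - (E - S * (P * M)⁻¹) * M) * (P - M)⁻¹)
    (haminus : aminus = -((H * E - E * H) - (E - S * (P * M)⁻¹) * P) * (P - M)⁻¹) :
    aplus + aminus = E - S * (P * M)⁻¹ ∧
    H * aplus - aplus * H = aplus * P ∧
    H * aminus - aminus * H = aminus * M := by
  set K := H * E - E * H with hK
  set G := (P * M)⁻¹ with hG
  set F := E - S * G with hF
  set D := P - M with hD
  have hdD := (Matrix.isUnit_iff_isUnit_det D).mp hPMsub
  have hdPM := (Matrix.isUnit_iff_isUnit_det (P * M)).mp hPMmul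
  -- commutations with D
  have hHD : H * D = D * H := by rw [hD]; noncomm_ring [hHP, hHM]
  have hPD : P * D = D * P := by rw [hD]; noncomm_ring [hPM]
  have hMD : M * D = D * M := by rw [hD]; noncomm_ring [hPM]
  have hHDi : H * D⁻¹ = D⁻¹ * H := comm_inv hPMsub hHD
  have hPDi : P * D⁻¹ = D⁻¹ * P := comm_inv hPMsub hPD
  have hMDi : M * D⁻¹ = D⁻¹ * M := comm_inv hPMsub hMD
  -- H commutes with G
  have hHPM : H * (P * M) = (P * M) * H := by
    rw [← mul_assoc, hHP, mul_assoc, hHM, ← mul_assoc]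
  have hHG : H * G = G * H := comm_inv hPMmul hHPM
  -- G * (M * P) = 1
  have hGMP : G * (M * P) = 1 := by
    rw [← hPM, hG, Matrix.nonsing_inv_mul _ hdPM]
  have hGPM : G * (P * M) = 1 := by
    rw [hG, Matrix.nonsing_inv_mul _ hdPM]
  -- H * F - F * H = K
  have hHF : H * F - F * H = K := by
    have : H * (S * G) = S * G * H := by
      calc H * (S * G) = (H * S) * G := by rw [mul_assoc]
        _ = S * (H * G) := by rw [hHS, mul_assoc]
        _ = S * G * H := by rw [hHG, mul_assoc]
    rw [hF, hK]; noncomm_ring [this]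
  -- key identity 1
  have key1 : H * (K - F * M) - (K - F * M) * H = (K - F * M) * P := by
    have hL : H * (K - F * M) - (K - F * M) * H
        = (H * K - K * H) - (H * F - F * H) * M := by
      noncomm_ring [hHM]
    rw [hL, hcr, hHF]
    have hSG : S * G * (M * P) = S := by
      rw [mul_assoc, hGMP, mul_one]
    rw [hF]
    calc -(E * (P * M)) + K * (P + M) + S - K * M
        = K * P + (- (E * (M * P)) + S) := by rw [hPM]; noncomm_ring
      _ = K * P + (-(E * (M * P)) + S * G * (M * P)) := by rw [hSG]
      _ = (K - (E - S * G) * M) * P := by noncomm_ring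
  -- key identity 2
  have key2 : H * (K - F * P) - (K - F * P) * H = (K - F * P) * M := by
    have hL : H * (K - F * P) - (K - F * P) * H
        = (H * K - K * H) - (H * F - F * H) * P := by
      noncomm_ring [hHP]
    rw [hL, hcr, hHF]
    have hSG : S * G * (P * M) = S := by
      rw [mul_assoc, hGPM, mul_one]
    rw [hF]
    calc -(E * (P * M)) + K * (P + M) + S - K * P
        = K * M + (- (E * (P * M)) + S) := by noncomm_ring
      _ = K * M + (-(E * (P * M)) + S * G * (P * M)) := by rw [hSG]
      _ = (K - (E - S * G) * P) * M := by noncomm_ring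
  refine ⟨?_, ?_, ?_⟩
  · rw [haplus, haminus]
    calc (K - F * M) * D⁻¹ + -(K - F * P) * D⁻¹
        = F * (D * D⁻¹) := by rw [hD]; noncomm_ring
      _ = F := by rw [Matrix.mul_nonsing_inv _ hdD, mul_one]
  · rw [haplus]
    calc H * ((K - F * M) * D⁻¹) - (K - F * M) * D⁻¹ * H
        = (H * (K - F * M) - (K - F * M) * H) * D⁻¹ := by
          rw [← mul_assoc, mul_assoc _ D⁻¹ H, ← hHDi]; noncomm_ring
      _ = (K - F * M) * P * D⁻¹ := by rw [key1]
      _ = (K - F * M) * D⁻¹ * P := by rw [mul_assoc, hPDi, mul_assoc]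
  · rw [haminus]
    calc H * (-(K - F * P) * D⁻¹) - -(K - F * P) * D⁻¹ * H
        = -((H * (K - F * P) - (K - F * P) * H) * D⁻¹) := by
          rw [mul_assoc _ D⁻¹ H, ← hHDi]; noncomm_ring
      _ = -((K - F * P) * M * D⁻¹) := by rw [key2]
      _ = -(K - F * P) * D⁻¹ * M := by rw [mul_assoc, hMDi]; noncomm_ring
end

section
/- Let n ∈ ℕ and let H, a, P be n×n complex matrices with H * a = a * (H + P) and H * P = P * H. Then for every t ∈ ℝ: Matrix.exp(t • (Complex.I • H)) * a * Matrix.exp(-(t • (Complex.I • H))) = a * Matrix.exp(t • (Complex.I • P)). -/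
/-! The exchange relation says that `a` intertwines `H` with `H + P`, so it intertwines every power
series in them: `exp (itH) * a = a * exp (it(H + P))`. Since `H` and `P` commute, the right side
splits as `a * exp (itP) * exp (itH)`, and multiplying by `exp (-itH)` on the right gives the claim. -/

namespace NormedSpace

variable {𝔸 : Type*} [NormedRing 𝔸] [NormedAlgebra ℚ 𝔸] [CompleteSpace 𝔸]

theorem exp_mul_mul_exp_neg_of_mul_eq_mul_add {x a q : 𝔸} (hexch : x * a = a * (x + q))
    (hcomm : Commute x q) : exp x * a * exp (-x) = a * exp q := by
  have hexp : exp x * a = a * exp q * exp x := by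
    rw [mul_assoc, ← exp_add_of_commute hcomm.symm, add_comm]
    exact (SemiconjBy.exp_right (x := a) hexch.symm).symm
  rw [hexp, mul_assoc, ← exp_add_of_commute (Commute.refl x).neg_right, add_neg_cancel, exp_zero,
    mul_one]

end NormedSpace

theorem heisenberg_evolution_of_exchange_operator (n : ℕ)
    (H a P : Matrix (Fin n) (Fin n) ℂ)
    (hexch : H * a = a * (H + P))
    (hHP : H * P = P * H) :
    ∀ t : ℝ,
      NormedSpace.exp (t • (Complex.I • H)) * a *
          NormedSpace.exp (-(t • (Complex.I • H)))
        = a * NormedSpace.exp (t • (Complex.I • P)) := by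
  intro t
  have hexch_t : t • (Complex.I • H) * a = a * (t • (Complex.I • H) + t • (Complex.I • P)) := by
    simp only [smul_mul_assoc, mul_smul_comm, ← smul_add, hexch]
  have hcomm_t : Commute (t • (Complex.I • H)) (t • (Complex.I • P)) :=
    (((Commute.smul_left hHP _).smul_right _).smul_left _).smul_right _
  -- Matrices carry no global norm; the operator norm induces their topology, on which `exp` depends.
  open scoped Matrix.Norms.Operator in
  exact NormedSpace.exp_mul_mul_exp_neg_of_mul_eq_mul_add hexch_t hcomm_t
end

section
/- Let N ∈ ℕ and let H, 𝓔, P, M, W be (N+1)×(N+1) real matrices with P - M invertible. Let φ₋, φ, φ₊ : Fin (N+1) → ℝ be vectors, let λ₋, λ, λ₊ ∈ ℝ with λ₊ ≠ λ₋, and let A, B, C ∈ ℝ. Assume: H.mulVec φ = λ • φ; H.mulVec φ₊ = λ₊ • φ₊; H.mulVec φ₋ = λ₋ • φ₋; 𝓔.mulVec φ = A • φ₊ + B • φ + C • φ₋; P.mulVec φ = (λ₊ - λ) • φ; M.mulVec φ = (λ₋ - λ) • φ; and W.mulVec φ = (-B) • φ. Define a⁺ = ((H*𝓔 - 𝓔*H)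 - (𝓔 + W)*M) * (P - M)⁻¹ and a⁻ = -((H*𝓔 - 𝓔*H) - (𝓔 + W)*P) * (P - M)⁻¹. Then a⁺.mulVec φ = A • φ₊ and a⁻.mulVec φ = C • φ₋. -/
open Matrix

theorem creation_annihilation_action (N : ℕ)
    (H 𝓔 P M W : Matrix (Fin (N + 1)) (Fin (N + 1)) ℝ)
    (hPM : IsUnit (P - M))
    (φm φ φp : Fin (N + 1) → ℝ)
    (lamM lam lamP : ℝ) (hlam : lamP ≠ lamM)
    (A B C : ℝ)
    (hφ : H.mulVec φ = lam • φ)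
    (hφp : H.mulVec φp = lamP • φp)
    (hφm : H.mulVec φm = lamM • φm)
    (h𝓔 : 𝓔.mulVec φ = A • φp + B • φ + C • φm)
    (hP : P.mulVec φ = (lamP - lam) • φ)
    (hM : M.mulVec φ = (lamM - lam) • φ)
    (hW : W.mulVec φ = (-B) • φ)
    (aplus aminus : Matrix (Fin (N + 1)) (Fin (N + 1)) ℝ)
    (haplus : aplus = ((H * 𝓔 - 𝓔 * H) - (𝓔 + W) * M) * (P - M)⁻¹)
    (haminus : aminus = -((H * 𝓔 - 𝓔 * H) - (𝓔 + W) * P) * (P - M)⁻¹) :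
    aplus.mulVec φ = A • φp ∧ aminus.mulVec φ = C • φm := by
  have hd : lamP - lamM ≠ 0 := sub_ne_zero.mpr hlam
  have hinvmul : (P - M)⁻¹ * (P - M) = 1 :=
    Matrix.nonsing_inv_mul _ ((Matrix.isUnit_iff_isUnit_det _).mp hPM)
  have hinv : (P - M)⁻¹.mulVec φ = (lamP - lamM)⁻¹ • φ := by
    have h1 : (P - M).mulVec φ = (lamP - lamM) • φ := by
      rw [sub_mulVec, hP, hM]
      module
    have h2 : (P - M)⁻¹.mulVec ((P - M).mulVec φ) = φ := by
      rw [Matrix.mulVec_mulVec, hinvmul, Matrix.one_mulVec]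
    rw [h1, Matrix.mulVec_smul] at h2
    have := congrArg (fun v => (lamP - lamM)⁻¹ • v) h2
    simp only [smul_smul, inv_mul_cancel₀ hd, one_smul] at this
    exact this
  constructor
  · rw [haplus, ← Matrix.mulVec_mulVec, hinv, Matrix.mulVec_smul]
    simp only [Matrix.sub_mulVec, Matrix.add_mulVec, ← Matrix.mulVec_mulVec,
      Matrix.mulVec_smul, Matrix.mulVec_add, hφ, hM, h𝓔, hW, hφp, hφm]
    have h : (lamP - lamM)⁻¹ * (lamP - lamM) = 1 := inv_mul_cancel₀ hd
    match_scalars <;> field_simp <;> ring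
  · rw [haminus, ← Matrix.mulVec_mulVec, hinv, Matrix.mulVec_smul, Matrix.neg_mulVec]
    simp only [Matrix.sub_mulVec, Matrix.add_mulVec, ← Matrix.mulVec_mulVec,
      Matrix.mulVec_smul, Matrix.mulVec_add, hφ, hP, h𝓔, hW, hφp, hφm]
    have h : (lamP - lamM)⁻¹ * (lamP - lamM) = 1 := inv_mul_cancel₀ hd
    match_scalars <;> field_simp <;> ring
end

section
/- Let N ≥ 1 be an integer, B, D : ℤ → ℝ with D 0 = 0 and B N = 0, λ : ℕ → ℝ with λ 0 = 0, and f : ℕ → ℤ → ℝ such that for every n ∈ ℕ and every integer x with 0 ≤ x ≤ N: B x · (f n x - f n (x+1)) + D x · (f n x - f n (x-1)) = λ n · f n x. Assume f 0 x ≠ 0 for all 0 ≤ x ≤ N. Define Q : ℤ → ℕ → ℝ by Q x n = f n x / f 0 x if 0 ≤ x ≤ N and Q x n = 0 otherwise; define Â x = -B x · f 0 (x+1) / f 0 x for 0 ≤ x ≤ N-1 and Â N = 0; and define Ĉ x = -D x · f 0 (x-1) / f 0 x for 1 ≤ x ≤ N and Ĉ 0 = 0. Then for every n ∈ ℕ and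 every 0 ≤ x ≤ N: λ n · Q x n = Â x · Q (x+1) n + (B x + D x) · Q x n + Ĉ x · Q (x-1) n, and moreover B x + D x = -Â x - Ĉ x. -/
/-!
Dividing the difference equation for `f n` at `x` by `f 0 x` expresses `λ n * Q x n` through the
neighbouring ratios `Q (x ± 1) n`, with the hopping coefficients `Ahat`, `Chat`; the case `n = 0`,
where `λ 0 = 0`, gives `B x + D x = -Ahat x - Chat x`. At the endpoints the neighbour leaves the
grid, but there the corresponding coefficient `B N` or `D 0` vanishes.
-/

theorem up_coeff_eq_on_Icc {N : ℤ} {B A g : ℤ → ℝ} (hBN : B N = 0)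
    (hA : ∀ x : ℤ, 0 ≤ x → x ≤ N - 1 → A x = -B x * g (x + 1) / g x) (hAN : A N = 0) :
    ∀ x : ℤ, 0 ≤ x → x ≤ N → A x = -B x * g (x + 1) / g x := by
  intro x hx0 hxN
  rcases hxN.eq_or_lt with rfl | hlt
  · simp [hAN, hBN]
  · exact hA x hx0 (by omega)

theorem down_coeff_eq_on_Icc {N : ℤ} {D C g : ℤ → ℝ} (hD0 : D 0 = 0)
    (hC : ∀ x : ℤ, 1 ≤ x → x ≤ N → C x = -D x * g (x - 1) / g x) (hC0 : C 0 = 0) :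
    ∀ x : ℤ, 0 ≤ x → x ≤ N → C x = -D x * g (x - 1) / g x := by
  intro x hx0 hxN
  rcases hx0.eq_or_lt with rfl | hpos
  · simp [hC0, hD0]
  · exact hC x (by omega) hxN

theorem coeff_mul_ratio_eq {N : ℤ} {f : ℕ → ℤ → ℝ} {Q : ℤ → ℕ → ℝ}
    (hf0 : ∀ x : ℤ, 0 ≤ x → x ≤ N → f 0 x ≠ 0)
    (hQ : ∀ (x : ℤ) (n : ℕ), Q x n = if 0 ≤ x ∧ x ≤ N then f n x / f 0 x else 0)
    {b k : ℝ} {x y : ℤ} (n : ℕ) (hk : k = -b * f 0 y / f 0 x) (hy : (0 ≤ y ∧ y ≤ N) ∨ b = 0) :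
    k * Q y n = -b * f n y / f 0 x := by
  rcases hy with hy | rfl
  · have hfy := hf0 y hy.1 hy.2
    rw [hk, hQ, if_pos hy]
    field_simp
  · simp [hk]

theorem dual_three_term_recurrence_general (N : ℤ)
    (B D : ℤ → ℝ) (hD0 : D 0 = 0) (hBN : B N = 0)
    (lam : ℕ → ℝ) (hlam0 : lam 0 = 0)
    (f : ℕ → ℤ → ℝ)
    (heq : ∀ (n : ℕ) (x : ℤ), 0 ≤ x → x ≤ N →
      B x * (f n x - f n (x + 1)) + D x * (f n x - f n (x - 1)) = lam n * f n x)
    (hf0 : ∀ x : ℤ, 0 ≤ x → x ≤ N → f 0 x ≠ 0)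
    (Q : ℤ → ℕ → ℝ)
    (hQ : ∀ (x : ℤ) (n : ℕ), Q x n = if 0 ≤ x ∧ x ≤ N then f n x / f 0 x else 0)
    (Ahat : ℤ → ℝ)
    (hAhat : ∀ x : ℤ, 0 ≤ x → x ≤ N - 1 → Ahat x = -B x * f 0 (x + 1) / f 0 x)
    (hAhatN : Ahat N = 0)
    (Chat : ℤ → ℝ)
    (hChat : ∀ x : ℤ, 1 ≤ x → x ≤ N → Chat x = -D x * f 0 (x - 1) / f 0 x)
    (hChat0 : Chat 0 = 0) :
    ∀ (n : ℕ) (x : ℤ), 0 ≤ x → x ≤ N →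
      lam n * Q x n
          = Ahat x * Q (x + 1) n + (B x + D x) * Q x n + Chat x * Q (x - 1) n
        ∧ B x + D x = -Ahat x - Chat x := by
  intro n x hx0 hxN
  have hA := up_coeff_eq_on_Icc hBN hAhat hAhatN x hx0 hxN
  have hC := down_coeff_eq_on_Icc hD0 hChat hChat0 x hx0 hxN
  have hAQ := coeff_mul_ratio_eq hf0 hQ n hA <| by
    rcases hxN.eq_or_lt with rfl | hlt
    · exact .inr hBN
    · exact .inl ⟨by omega, by omega⟩
  have hCQ := coeff_mul_ratio_eq hf0 hQ n hC <| by
    rcases hx0.eq_or_lt with rfl | hpos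
    · exact .inr hD0
    · exact .inl ⟨by omega, by omega⟩
  have hfx := hf0 x hx0 hxN
  have hground := heq 0 x hx0 hxN
  rw [hlam0, zero_mul] at hground
  rw [hQ x n, if_pos ⟨hx0, hxN⟩, hAQ, hCQ, hA, hC]
  constructor
  · linear_combination -heq n x hx0 hxN / f 0 x
  · field_simp
    linear_combination hground

theorem dual_three_term_recurrence (N : ℤ) (hN : 1 ≤ N)
    (B D : ℤ → ℝ) (hD0 : D 0 = 0) (hBN : B N = 0)
    (lam : ℕ → ℝ) (hlam0 : lam 0 = 0)
    (f : ℕ → ℤ → ℝ)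
    (heq : ∀ (n : ℕ) (x : ℤ), 0 ≤ x → x ≤ N →
      B x * (f n x - f n (x + 1)) + D x * (f n x - f n (x - 1)) = lam n * f n x)
    (hf0 : ∀ x : ℤ, 0 ≤ x → x ≤ N → f 0 x ≠ 0)
    (Q : ℤ → ℕ → ℝ)
    (hQ : ∀ (x : ℤ) (n : ℕ), Q x n = if 0 ≤ x ∧ x ≤ N then f n x / f 0 x else 0)
    (Ahat : ℤ → ℝ)
    (hAhat : ∀ x : ℤ, 0 ≤ x → x ≤ N - 1 → Ahat x = -B x * f 0 (x + 1) / f 0 x)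
    (hAhatN : Ahat N = 0)
    (Chat : ℤ → ℝ)
    (hChat : ∀ x : ℤ, 1 ≤ x → x ≤ N → Chat x = -D x * f 0 (x - 1) / f 0 x)
    (hChat0 : Chat 0 = 0) :
    ∀ (n : ℕ) (x : ℤ), 0 ≤ x → x ≤ N →
      lam n * Q x n
          = Ahat x * Q (x + 1) n + (B x + D x) * Q x n + Chat x * Q (x - 1) n
        ∧ B x + D x = -Ahat x - Chat x :=
  dual_three_term_recurrence_general N B D hD0 hBN lam hlam0 f heq hf0 Q hQ Ahat hAhat hAhatN Chat
    hChat hChat0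
end
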